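/- Let n ∈ ℤ_{≥0}^r with n ≠ 0, and assume n is normal and every n − e_j that lies in ℤ_{≥0}^r is normal. Then there exist complex numbers α_n and ρ_{n,1},…,ρ_{n,r}, with ρ_{n,j} = 0 whenever n_j = 0, such that Φ_n(z) = α_n Φ*_n(z) + Σ_{j=1}^r ρ_{n,j} z Φ_{n−e_j}(z); moreover necessarily α_n = Φ_n(0), and the coefficients ρ_{n,j} are uniquely determined. -/

import Mathlib

open MeasureTheory Polynomial

noncomputable section

/-- A system of measures on the unit circle: each `μ j` is a probability measure,
carried by the unit circle `∂𝔻 = {z : |z| = 1}`, with infinite support. -/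
def MopucSystem {r : ℕ} (μ : Fin r → Measure ℂ) : Prop :=
  ∀ j, IsProbabilityMeasure (μ j) ∧ μ j ((Metric.sphere (0 : ℂ) 1)ᶜ) = 0 ∧
    ∀ s : Set ℂ, s.Finite → μ j (sᶜ) ≠ 0

/-- The inner product `⟨P, Q⟩_μ = ∫ P(z)·conj (Q(z)) dμ(z)`. -/
def pip (μ : Measure ℂ) (P Q : Polynomial ℂ) : ℂ :=
  ∫ z, P.eval z * (starRingEnd ℂ) (Q.eval z) ∂μ

/-- `⟨P, z^p⟩_μ`. -/
def mip (μ : Measure ℂ) (P : Polynomial ℂ) (p : ℕ) : ℂ :=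
  pip μ P (X ^ p)

/-- The moment `ν^p = ∫ z^p dμ(z)` for `p ∈ ℤ` (on the circle `z^{-m} = conj (z^m)`). -/
def mom (μ : Measure ℂ) (p : ℤ) : ℂ :=
  ∫ z, z ^ p ∂μ

/-- The linear position of the pair `(j, q)` (with `q < n j`): `(∑_{i<j} n i) + q`.
This enumerates the pairs, in lexicographic order, by `0, 1, …, |n| − 1`. -/
def linIdx {r : ℕ} (n : Fin r → ℕ) (c : (j : Fin r) × Fin (n j)) : ℕ :=
  (∑ i ∈ Finset.univ.filter (fun i => i < c.1), n i) + (c.2 : ℕ)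

lemma ae_norm_one {μ : Measure ℂ} (hc : μ ((Metric.sphere (0 : ℂ) 1)ᶜ) = 0) :
    ∀ᵐ z ∂μ, ‖z‖ = 1 := by
  rw [ae_iff]
  convert hc using 2
  ext z
  simp [Complex.dist_eq]

lemma integrable_zpow (μ : Measure ℂ) [IsProbabilityMeasure μ]
    (hc : μ ((Metric.sphere (0 : ℂ) 1)ᶜ) = 0) (m : ℤ) :
    Integrable (fun z : ℂ => z ^ m) μ := by
  refine Integrable.mono' (integrable_const 1) ?_ ?_
  · exact (measurable_id.pow_const m).aestronglyMeasurable
  · filter_upwards [ae_norm_one hc] with z hz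
    rw [norm_zpow, hz, one_zpow]

lemma mip_eq_sum (μ : Measure ℂ) [IsProbabilityMeasure μ]
    (hc : μ ((Metric.sphere (0 : ℂ) 1)ᶜ) = 0) (P : Polynomial ℂ) (p N : ℕ)
    (hN : P.natDegree < N) :
    mip μ P p = ∑ k ∈ Finset.range N, P.coeff k * mom μ ((k : ℤ) - (p : ℤ)) := by
  have h1 : mip μ P p = ∫ z, ∑ k ∈ Finset.range N, P.coeff k * z ^ ((k : ℤ) - (p : ℤ)) ∂μ := by
    unfold mip
    refine integral_congr_ae ?_
    filter_upwards [ae_norm_one hc] with z hz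
    have hz0 : z ≠ 0 := by intro h; simp [h] at hz
    rw [eval_eq_sum_range' hN, Finset.sum_mul]
    refine Finset.sum_congr rfl fun k _ => ?_
    have hconj : (starRingEnd ℂ) ((X ^ p : Polynomial ℂ).eval z) = z ^ (-(p : ℤ)) := by
      rw [eval_pow, eval_X, map_pow, ← Complex.inv_eq_conj (by simpa using hz),
        inv_pow, ← zpow_natCast, ← zpow_neg]
    rw [hconj, mul_assoc]
    congr 1
    rw [← zpow_natCast z k, ← zpow_add₀ hz0]
    ring_nf
  rw [h1, integral_finset_sum]
  · refine Finset.sum_congr rfl fun k _ => ?_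
    simp_rw [← smul_eq_mul, integral_smul]
    rfl
  · intro k _
    exact (integrable_zpow μ hc _).const_mul _

lemma mip_X_mul (μ : Measure ℂ) (hc : μ ((Metric.sphere (0 : ℂ) 1)ᶜ) = 0)
    (Q : Polynomial ℂ) (p : ℕ) :
    mip μ (X * Q) (p + 1) = mip μ Q p := by
  unfold mip
  refine integral_congr_ae ?_
  filter_upwards [ae_norm_one hc] with z hz
  have h1 : z * (starRingEnd ℂ) z = 1 := by
    rw [Complex.mul_conj]
    norm_cast
    rw [Complex.normSq_eq_norm_sq]
    simp [hz]
  simp only [eval_mul, eval_X, eval_pow, map_pow, pow_succ, map_mul]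
  calc z * Q.eval z * ((starRingEnd ℂ) z ^ p * (starRingEnd ℂ) z)
      = (z * (starRingEnd ℂ) z) * (Q.eval z * (starRingEnd ℂ) z ^ p) := by ring
    _ = Q.eval z * (starRingEnd ℂ) z ^ p := by rw [h1, one_mul]

lemma mip_add (μ : Measure ℂ) [IsProbabilityMeasure μ]
    (hc : μ ((Metric.sphere (0 : ℂ) 1)ᶜ) = 0) (P Q : Polynomial ℂ) (p : ℕ) :
    mip μ (P + Q) p = mip μ P p + mip μ Q p := by
  set N := max P.natDegree Q.natDegree + 1 with hNdef
  have hP : P.natDegree < N := by omega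
  have hQ : Q.natDegree < N := by omega
  have hPQ : (P + Q).natDegree < N :=
    lt_of_le_of_lt (natDegree_add_le P Q) (by omega)
  rw [mip_eq_sum μ hc _ p N hPQ, mip_eq_sum μ hc _ p N hP, mip_eq_sum μ hc _ p N hQ,
    ← Finset.sum_add_distrib]
  refine Finset.sum_congr rfl fun k _ => ?_
  rw [coeff_add, add_mul]

lemma mip_C_mul (μ : Measure ℂ) [IsProbabilityMeasure μ]
    (hc : μ ((Metric.sphere (0 : ℂ) 1)ᶜ) = 0) (c : ℂ) (P : Polynomial ℂ) (p : ℕ) :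
    mip μ (C c * P) p = c * mip μ P p := by
  set N := P.natDegree + 1
  have hP : P.natDegree < N := Nat.lt_succ_self _
  have hCP : (C c * P).natDegree < N := lt_of_le_of_lt (natDegree_C_mul_le c P) hP
  rw [mip_eq_sum μ hc _ p N hCP, mip_eq_sum μ hc _ p N hP, Finset.mul_sum]
  refine Finset.sum_congr rfl fun k _ => ?_
  rw [coeff_C_mul, mul_assoc]

lemma mip_zero (μ : Measure ℂ) [IsProbabilityMeasure μ]
    (hc : μ ((Metric.sphere (0 : ℂ) 1)ᶜ) = 0) (p : ℕ) :
    mip μ (0 : Polynomial ℂ) p = 0 := by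
  rw [mip_eq_sum μ hc 0 p 1 (by simp)]
  simp

lemma mip_sub (μ : Measure ℂ) [IsProbabilityMeasure μ]
    (hc : μ ((Metric.sphere (0 : ℂ) 1)ᶜ) = 0) (P Q : Polynomial ℂ) (p : ℕ) :
    mip μ (P - Q) p = mip μ P p - mip μ Q p := by
  have h := mip_add μ hc (P - Q) Q p
  rw [sub_add_cancel] at h
  rw [h]; ring

lemma mip_sum (μ : Measure ℂ) [IsProbabilityMeasure μ]
    (hc : μ ((Metric.sphere (0 : ℂ) 1)ᶜ) = 0) {ι : Type*} (s : Finset ι)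
    (f : ι → Polynomial ℂ) (p : ℕ) :
    mip μ (∑ i ∈ s, f i) p = ∑ i ∈ s, mip μ (f i) p := by
  classical
  induction s using Finset.induction_on with
  | empty => simpa using mip_zero μ hc p
  | insert _ _ h ih =>
      rw [Finset.sum_insert h, Finset.sum_insert h, mip_add μ hc, ih]

lemma sum_filter_lt_add_le {r : ℕ} (n : Fin r → ℕ) (j : Fin r) :
    (∑ i ∈ Finset.univ.filter (fun i => i < j), n i) + n j ≤ ∑ i, n i := by
  classical
  have hnot : j ∉ Finset.univ.filter (fun i => i < j) := by simp
  have : (∑ i ∈ insert j (Finset.univ.filter (fun i => i < j)), n i) ≤ ∑ i, n i :=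
    Finset.sum_le_sum_of_subset (Finset.subset_univ _)
  rw [Finset.sum_insert hnot] at this
  omega

lemma sum_filter_lt_mono {r : ℕ} (n : Fin r → ℕ) {j j' : Fin r} (h : j < j') :
    (∑ i ∈ Finset.univ.filter (fun i => i < j), n i) + n j ≤
      ∑ i ∈ Finset.univ.filter (fun i => i < j'), n i := by
  classical
  have hnot : j ∉ Finset.univ.filter (fun i => i < j) := by simp
  have hsub : insert j (Finset.univ.filter (fun i => i < j)) ⊆
      Finset.univ.filter (fun i => i < j') := by
    intro i hi
    simp only [Finset.mem_insert, Finset.mem_filter, Finset.mem_univ, true_and] at *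
    rcases hi with rfl | hi
    · exact h
    · exact hi.trans h
  have := Finset.sum_le_sum_of_subset (f := n) hsub
  rw [Finset.sum_insert hnot] at this
  omega

lemma linIdx_lt {r : ℕ} (n : Fin r → ℕ) (c : (j : Fin r) × Fin (n j)) :
    linIdx n c < ∑ i, n i := by
  have h1 := sum_filter_lt_add_le n c.1
  have h2 : (c.2 : ℕ) < n c.1 := c.2.isLt
  unfold linIdx
  omega

lemma linIdx_injective {r : ℕ} (n : Fin r → ℕ) : Function.Injective (linIdx n) := by
  intro c c' h
  unfold linIdx at h
  rcases lt_trichotomy c.1 c'.1 with hlt | heq | hgt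
  · exfalso
    have h1 := sum_filter_lt_mono n hlt
    have h2 : (c.2 : ℕ) < n c.1 := c.2.isLt
    omega
  · obtain ⟨j, q⟩ := c
    obtain ⟨j', q'⟩ := c'
    cases heq
    simp only [add_right_inj] at h
    have : q = q' := Fin.ext h
    rw [this]
  · exfalso
    have h1 := sum_filter_lt_mono n hgt
    have h2 : (c'.2 : ℕ) < n c'.1 := c'.2.isLt
    omega

def linEquiv {r : ℕ} (n : Fin r → ℕ) : ((j : Fin r) × Fin (n j)) ≃ Fin (∑ i, n i) :=
  Equiv.ofBijective (fun c => ⟨linIdx n c, linIdx_lt n c⟩)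
    ((Fintype.bijective_iff_injective_and_card _).mpr
      ⟨fun c c' h => linIdx_injective n (by simpa using congrArg Fin.val h), by simp⟩)

lemma linEquiv_val {r : ℕ} (n : Fin r → ℕ) (c : (j : Fin r) × Fin (n j)) :
    ((linEquiv n c : Fin (∑ i, n i)) : ℕ) = linIdx n c := rfl

/-- The moment matrix `M_n`: rows are indexed by pairs `(j, q)` with `1 ≤ j ≤ r`,
`0 ≤ q ≤ n j − 1`, columns by `p = 0, …, |n| − 1` (realized as pairs via the
order-preserving enumeration `linIdx`), and the entry at `((j,q), p)` is `ν_j^{p−q}`. -/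
def Mmat {r : ℕ} (μ : Fin r → Measure ℂ) (n : Fin r → ℕ) :
    Matrix ((j : Fin r) × Fin (n j)) ((j : Fin r) × Fin (n j)) ℂ :=
  Matrix.of fun rq c => mom (μ rq.1) ((linIdx n c : ℤ) - ((rq.2 : ℕ) : ℤ))

/-- The index `n` is normal if `det M_n ≠ 0`.  (For `n = 0` the matrix is empty and its
determinant is `1`, so `n = 0` is normal, matching the convention of the paper.) -/
def NormalIndex {r : ℕ} (μ : Fin r → Measure ℂ) (n : Fin r → ℕ) : Prop :=
  (Mmat μ n).det ≠ 0

/-- A type II multiple orthogonal polynomial for the multi-index `n`. -/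
def IsTypeII {r : ℕ} (μ : Fin r → Measure ℂ) (n : Fin r → ℕ) (P : Polynomial ℂ) : Prop :=
  P ≠ 0 ∧ P.degree ≤ ((∑ j, n j : ℕ) : WithBot ℕ) ∧
    ∀ j, ∀ p : ℕ, p < n j → mip (μ j) P p = 0

/-- A type II* multiple orthogonal polynomial for the multi-index `n`. -/
def IsTypeIIStar {r : ℕ} (μ : Fin r → Measure ℂ) (n : Fin r → ℕ) (P : Polynomial ℂ) : Prop :=
  P ≠ 0 ∧ P.degree ≤ ((∑ j, n j : ℕ) : WithBot ℕ) ∧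
    ∀ j, ∀ p : ℕ, 1 ≤ p → p ≤ n j → mip (μ j) P p = 0

/-- A type I multiple orthogonal polynomial for the multi-index `n`:
a nonzero vector of polynomials with `deg (L j) ≤ n j − 1` (so `L j = 0` when `n j = 0`),
and `∑_j ⟨L j, z^p⟩_j = 0` for `p = 0, …, |n| − 2`. -/
def IsTypeI {r : ℕ} (μ : Fin r → Measure ℂ) (n : Fin r → ℕ) (L : Fin r → Polynomial ℂ) : Prop :=
  L ≠ 0 ∧ (∀ j, (L j).degree < ((n j : ℕ) : WithBot ℕ)) ∧
    ∀ p : ℕ, p + 2 ≤ ∑ j, n j → ∑ j, mip (μ j) (L j) p = 0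

/-- A type I* multiple orthogonal polynomial for the multi-index `n`:
a nonzero vector of polynomials with `deg (L j) ≤ n j − 1`,
and `∑_j ⟨L j, z^p⟩_j = 0` for `p = 1, …, |n| − 1`. -/
def IsTypeIStar {r : ℕ} (μ : Fin r → Measure ℂ) (n : Fin r → ℕ) (L : Fin r → Polynomial ℂ) : Prop :=
  L ≠ 0 ∧ (∀ j, (L j).degree < ((n j : ℕ) : WithBot ℕ)) ∧
    ∀ p : ℕ, 1 ≤ p → p + 1 ≤ ∑ j, n j → ∑ j, mip (μ j) (L j) p = 0

/-- `Φ_n`: the monic type II polynomial of degree exactly `|n|`. -/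
def IsPhi {r : ℕ} (μ : Fin r → Measure ℂ) (n : Fin r → ℕ) (P : Polynomial ℂ) : Prop :=
  IsTypeII μ n P ∧ P.Monic ∧ P.natDegree = ∑ j, n j

/-- `Φ*_n`: the type II* polynomial with `Φ*_n(0) = 1`. -/
def IsPhiStar {r : ℕ} (μ : Fin r → Measure ℂ) (n : Fin r → ℕ) (P : Polynomial ℂ) : Prop :=
  IsTypeIIStar μ n P ∧ P.eval 0 = 1

/-- `Λ_n`: the type I vector normalized by `∑_j ⟨Λ_{n,j}, z^{|n|−1}⟩_j = 1`. -/
def IsLambda {r : ℕ} (μ : Fin r → Measure ℂ) (n : Fin r → ℕ) (L : Fin r → Polynomial ℂ) : Prop :=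
  IsTypeI μ n L ∧ ∑ j, mip (μ j) (L j) ((∑ i, n i) - 1) = 1

/-- `Λ*_n`: the type I* vector normalized by `∑_j ⟨Λ*_{n,j}, 1⟩_j = 1`. -/
def IsLambdaStar {r : ℕ} (μ : Fin r → Measure ℂ) (n : Fin r → ℕ) (L : Fin r → Polynomial ℂ) : Prop :=
  IsTypeIStar μ n L ∧ ∑ j, mip (μ j) (L j) 0 = 1

/-- The multi-index `n + e_k`. -/
def eAdd {r : ℕ} (n : Fin r → ℕ) (k : Fin r) : Fin r → ℕ :=
  Function.update n k (n k + 1)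

/-- The multi-index `n − e_k` (used only when `n k ≥ 1`). -/
def eSub {r : ℕ} (n : Fin r → ℕ) (k : Fin r) : Fin r → ℕ :=
  Function.update n k (n k - 1)

lemma typeII_small {r : ℕ} (μ : Fin r → Measure ℂ) (hμ : MopucSystem μ) (n : Fin r → ℕ)
    (hnorm : NormalIndex μ n) (P : Polynomial ℂ)
    (hdeg : P.degree < ((∑ j, n j : ℕ) : WithBot ℕ))
    (horth : ∀ j, ∀ q, q < n j → mip (μ j) P q = 0) : P = 0 := by
  classical
  by_cases hP0 : P = 0
  · exact hP0
  exfalso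
  set N := ∑ j, n j with hNdef
  have hndeg : P.natDegree < N := (natDegree_lt_iff_degree_lt hP0).mpr hdeg
  set v : ((j : Fin r) × Fin (n j)) → ℂ := fun c => P.coeff (linIdx n c) with hv
  have hmv : (Mmat μ n).mulVec v = 0 := by
    funext rq
    have hprob : IsProbabilityMeasure (μ rq.1) := (hμ rq.1).1
    have hc := (hμ rq.1).2.1
    have h1 : (Mmat μ n).mulVec v rq
        = ∑ c : (j : Fin r) × Fin (n j),
            P.coeff (linIdx n c) * mom (μ rq.1) ((linIdx n c : ℤ) - ((rq.2 : ℕ) : ℤ)) := by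
      simp only [Matrix.mulVec, dotProduct, Mmat, Matrix.of_apply, hv]
      exact Finset.sum_congr rfl fun c _ => mul_comm _ _
    have h2 : ∑ c : (j : Fin r) × Fin (n j),
            P.coeff (linIdx n c) * mom (μ rq.1) ((linIdx n c : ℤ) - ((rq.2 : ℕ) : ℤ))
        = ∑ p ∈ Finset.range N, P.coeff p * mom (μ rq.1) ((p : ℤ) - ((rq.2 : ℕ) : ℤ)) := by
      rw [← Fin.sum_univ_eq_sum_range (fun p => P.coeff p * mom (μ rq.1) ((p:ℤ) - ((rq.2:ℕ):ℤ))) N]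
      exact Equiv.sum_comp (linEquiv n)
        (fun p : Fin N => P.coeff p * mom (μ rq.1) ((p : ℤ) - ((rq.2 : ℕ) : ℤ)))
    have h3 := horth rq.1 rq.2 rq.2.isLt
    rw [mip_eq_sum _ hc P rq.2 N hndeg] at h3
    simp only [Pi.zero_apply]
    rw [h1, h2, h3]
  have hv0 : v = 0 := Matrix.eq_zero_of_mulVec_eq_zero hnorm hmv
  apply hP0
  ext p
  rcases lt_or_ge p N with hp | hp
  · have : linIdx n ((linEquiv n).symm ⟨p, hp⟩) = p := by
      have := congrArg Fin.val ((linEquiv n).apply_symm_apply ⟨p, hp⟩)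
      exact this
    have h4 := congrFun hv0 ((linEquiv n).symm ⟨p, hp⟩)
    simpa [hv, this] using h4
  · simp [Polynomial.coeff_eq_zero_of_natDegree_lt (lt_of_lt_of_le hndeg hp)]

lemma kappa_ne_zero {r : ℕ} (μ : Fin r → Measure ℂ) (hμ : MopucSystem μ) (n : Fin r → ℕ)
    (hnorm : NormalIndex μ n) (j : Fin r) (hj : n j ≠ 0) (P : Polynomial ℂ)
    (hP : IsPhi μ (eSub n j) P) :
    mip (μ j) P (n j - 1) ≠ 0 := by
  intro hzero
  have hsum : ∑ i, eSub n j i = (∑ i, n i) - 1 := by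
    unfold eSub
    rw [Finset.sum_update_of_mem (Finset.mem_univ j)]
    have hle : n j ≤ ∑ i, n i := Finset.single_le_sum (fun i _ => Nat.zero_le _) (Finset.mem_univ j)
    have h2 : ∑ i, n i = n j + ∑ i ∈ Finset.univ \ {j}, n i :=
      Finset.sum_eq_add_sum_sdiff_singleton_of_mem (Finset.mem_univ j) n
    omega
  have hNpos : 0 < ∑ i, n i := by
    have : n j ≤ ∑ i, n i := Finset.single_le_sum (fun i _ => Nat.zero_le _) (Finset.mem_univ j)
    omega
  have hdeg : P.degree < ((∑ i, n i : ℕ) : WithBot ℕ) := by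
    have h1 : P.degree = (P.natDegree : WithBot ℕ) := degree_eq_natDegree hP.1.1
    rw [h1, hP.2.2, hsum]
    exact_mod_cast Nat.sub_lt hNpos one_pos
  have horth : ∀ i, ∀ q, q < n i → mip (μ i) P q = 0 := by
    intro i q hq
    by_cases hij : i = j
    · subst hij
      rcases Nat.lt_or_ge q (n i - 1) with h | h
      · exact hP.1.2.2 i q (by simpa [eSub] using h)
      · have : q = n i - 1 := by omega
        rw [this]; exact hzero
    · exact hP.1.2.2 i q (by simpa [eSub, Function.update_of_ne hij] using hq)
  exact hP.1.1 (typeII_small μ hμ n hnorm P hdeg horth)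

/-- if `n ≠ 0` is normal and every `n − e_j` with `n j ≥ 1` is normal, then
there are `α_n` and `ρ_{n,1},…,ρ_{n,r}` (with `ρ_{n,j} = 0` when `n j = 0`) with
`Φ_n = α_n Φ*_n + ∑_j ρ_{n,j} z Φ_{n−e_j}`; necessarily `α_n = Φ_n(0)`, and the `ρ_{n,j}`
are uniquely determined. -/
theorem szego_recurrence_typeII (r : ℕ) (hr : 0 < r) (μ : Fin r → Measure ℂ)
    (hμ : MopucSystem μ) (n : Fin r → ℕ) (hn : n ≠ 0)
    (hnorm : NormalIndex μ n)
    (hnorm' : ∀ j, n j ≠ 0 → NormalIndex μ (eSub n j))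
    (Φ : Polynomial ℂ) (hΦ : IsPhi μ n Φ)
    (Φs : Polynomial ℂ) (hΦs : IsPhiStar μ n Φs)
    (Φ' : Fin r → Polynomial ℂ)
    (hΦ' : ∀ j, (n j = 0 → Φ' j = 0) ∧ (n j ≠ 0 → IsPhi μ (eSub n j) (Φ' j))) :
    (∃ ρ : Fin r → ℂ, (∀ j, n j = 0 → ρ j = 0) ∧
        Φ = C (Φ.eval 0) * Φs + ∑ j, C (ρ j) * (X * Φ' j)) ∧
    (∀ (α₁ α₂ : ℂ) (ρ₁ ρ₂ : Fin r → ℂ),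
        (∀ j, n j = 0 → ρ₁ j = 0) → (∀ j, n j = 0 → ρ₂ j = 0) →
        Φ = C α₁ * Φs + ∑ j, C (ρ₁ j) * (X * Φ' j) →
        Φ = C α₂ * Φs + ∑ j, C (ρ₂ j) * (X * Φ' j) →
        α₁ = Φ.eval 0 ∧ ρ₁ = ρ₂) := by
  classical
  have hprob : ∀ j, IsProbabilityMeasure (μ j) := fun j => (hμ j).1
  have hcar : ∀ j, μ j ((Metric.sphere (0 : ℂ) 1)ᶜ) = 0 := fun j => (hμ j).2.1
  set N := ∑ j, n j with hNdef
  have hNpos : 0 < N := by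
    rcases Nat.eq_zero_or_pos N with h | h
    · exfalso
      apply hn
      funext j
      exact Finset.sum_eq_zero_iff.mp h j (Finset.mem_univ j)
    · exact h
  have hsumSub : ∀ j, n j ≠ 0 → (∑ i, eSub n j i) = N - 1 := by
    intro j hj
    unfold eSub
    rw [Finset.sum_update_of_mem (Finset.mem_univ j)]
    have h2 : ∑ i, n i = n j + ∑ i ∈ Finset.univ \ {j}, n i :=
      Finset.sum_eq_add_sum_sdiff_singleton_of_mem (Finset.mem_univ j) n
    omega
  have hΦorth : ∀ j, ∀ p, p < n j → mip (μ j) Φ p = 0 := hΦ.1.2.2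
  have hΦsorth : ∀ j, ∀ p, 1 ≤ p → p ≤ n j → mip (μ j) Φs p = 0 := hΦs.1.2.2
  have hκ : ∀ j, n j ≠ 0 → mip (μ j) (Φ' j) (n j - 1) ≠ 0 := fun j hj =>
    kappa_ne_zero μ hμ n hnorm j hj (Φ' j) ((hΦ' j).2 hj)
  have hΦ'deg : ∀ j, (Φ' j).degree < (N : WithBot ℕ) := by
    intro j
    by_cases hj : n j = 0
    · rw [(hΦ' j).1 hj, degree_zero]
      exact_mod_cast WithBot.bot_lt_coe N
    · have h1 := ((hΦ' j).2 hj).1.1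
      have h2 := ((hΦ' j).2 hj).2.2
      rw [hsumSub j hj] at h2
      rw [degree_eq_natDegree h1, h2]
      exact_mod_cast Nat.sub_lt hNpos one_pos
  -- the key computation for uniqueness (and existence of α)
  have keyα : ∀ (a : ℂ) (ρ' : Fin r → ℂ),
      Φ = C a * Φs + ∑ j, C (ρ' j) * (X * Φ' j) → a = Φ.eval 0 := by
    intro a ρ' h
    have h0 := congrArg (fun P : Polynomial ℂ => P.eval 0) h
    simp only [eval_add, eval_mul, eval_C, eval_X, eval_finset_sum, zero_mul, mul_zero,
      add_zero, Finset.sum_const_zero, hΦs.2, mul_one] at h0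
    exact h0.symm
  have key : ∀ (i : Fin r), n i ≠ 0 → ∀ (a : ℂ) (ρ' : Fin r → ℂ), (∀ j, n j = 0 → ρ' j = 0) →
      Φ = C a * Φs + ∑ j, C (ρ' j) * (X * Φ' j) →
      mip (μ i) Φ (n i) = a * mip (μ i) Φs (n i) + ρ' i * mip (μ i) (Φ' i) (n i - 1) := by
    intro i hi a ρ' hz h
    haveI := hprob i
    rw [h, mip_add _ (hcar i), mip_C_mul _ (hcar i), mip_sum _ (hcar i)]
    congr 1
    rw [Finset.sum_eq_single i]
    · rw [mip_C_mul _ (hcar i)]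
      congr 1
      conv_lhs => rw [show n i = (n i - 1) + 1 from by omega]
      exact mip_X_mul (μ i) (hcar i) _ _
    · intro j _ hji
      rw [mip_C_mul _ (hcar i)]
      by_cases hj0 : n j = 0
      · rw [hz j hj0, zero_mul]
      · have h1 : mip (μ i) (X * Φ' j) (n i) = mip (μ i) (Φ' j) (n i - 1) := by
          conv_lhs => rw [show n i = (n i - 1) + 1 from by omega]
          exact mip_X_mul (μ i) (hcar i) _ _
        have h2 : mip (μ i) (Φ' j) (n i - 1) = 0 := by
          refine ((hΦ' j).2 hj0).1.2.2 i (n i - 1) ?_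
          unfold eSub
          rw [Function.update_of_ne (Ne.symm hji)]
          omega
        rw [h1, h2, mul_zero]
    · intro h'
      exact absurd (Finset.mem_univ i) h'
  constructor
  · -- existence
    set α := Φ.eval 0 with hα
    set Ψ := Φ - C α * Φs with hΨdef
    have hΨ0 : Ψ.coeff 0 = 0 := by
      simp [hΨdef, coeff_sub, coeff_C_mul, Polynomial.coeff_zero_eq_eval_zero, hΦs.2, hα]
    obtain ⟨Q, hQ⟩ := Polynomial.X_dvd_iff.mpr hΨ0
    have hΦeq : Φ = C α * Φs + X * Q := by
      rw [← hQ, hΨdef]; ring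
    have hdegΨ : Ψ.natDegree ≤ N := by
      refine le_trans (natDegree_sub_le _ _) (max_le ?_ ?_)
      · exact le_of_eq hΦ.2.2
      · exact le_trans (natDegree_C_mul_le _ _) (natDegree_le_iff_degree_le.mpr hΦs.1.2.1)
    have hdegQ : Q.degree < (N : WithBot ℕ) := by
      by_cases hQ0 : Q = 0
      · rw [hQ0, degree_zero]
        exact_mod_cast WithBot.bot_lt_coe N
      · have h1 : Ψ.natDegree = 1 + Q.natDegree := by
          rw [hQ, natDegree_mul X_ne_zero hQ0, natDegree_X]
        rw [degree_eq_natDegree hQ0]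
        exact_mod_cast by omega
    have hQorth : ∀ j q, q + 1 < n j → mip (μ j) Q q = 0 := by
      intro j q hq
      haveI := hprob j
      have h1 : mip (μ j) Q q = mip (μ j) Ψ (q + 1) := by
        rw [← mip_X_mul (μ j) (hcar j) Q q, hQ]
      rw [h1, hΨdef, mip_sub _ (hcar j), mip_C_mul _ (hcar j),
        hΦorth j (q + 1) hq, hΦsorth j (q + 1) (by omega) (by omega)]
      ring
    set ρ : Fin r → ℂ := fun j =>
      if h : n j = 0 then 0 else mip (μ j) Q (n j - 1) / mip (μ j) (Φ' j) (n j - 1) with hρ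
    set R := Q - ∑ j, C (ρ j) * Φ' j with hRdef
    have horthR : ∀ j, ∀ q, q < n j → mip (μ j) R q = 0 := by
      intro j q hq
      haveI := hprob j
      have hj0 : n j ≠ 0 := by omega
      rw [hRdef, mip_sub _ (hcar j), mip_sum _ (hcar j)]
      rcases Nat.lt_or_ge (q + 1) (n j) with hcase | hcase
      · rw [hQorth j q hcase]
        rw [Finset.sum_eq_zero, sub_zero]
        intro i _
        rw [mip_C_mul _ (hcar j)]
        by_cases hi0 : n i = 0
        · rw [hρ]; simp [hi0]
        · have : mip (μ j) (Φ' i) q = 0 := by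
            refine ((hΦ' i).2 hi0).1.2.2 j q ?_
            unfold eSub
            by_cases hij : i = j
            · subst hij
              rw [Function.update_self]
              omega
            · rw [Function.update_of_ne (Ne.symm hij)]
              exact hq
          rw [this, mul_zero]
      · have hqq : q = n j - 1 := by omega
        subst hqq
        rw [Finset.sum_eq_single j]
        · rw [mip_C_mul _ (hcar j), hρ]
          simp only [dif_neg hj0]
          rw [div_mul_cancel₀ _ (hκ j hj0), sub_self]
        · intro i _ hij
          rw [mip_C_mul _ (hcar j)]
          by_cases hi0 : n i = 0
          · rw [hρ]; simp [hi0]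
          · have : mip (μ j) (Φ' i) (n j - 1) = 0 := by
              refine ((hΦ' i).2 hi0).1.2.2 j (n j - 1) ?_
              unfold eSub
              rw [Function.update_of_ne (Ne.symm hij)]
              omega
            rw [this, mul_zero]
        · intro h'
          exact absurd (Finset.mem_univ j) h'
    have hdegR : R.degree < (N : WithBot ℕ) := by
      rw [hRdef]
      refine lt_of_le_of_lt (degree_sub_le _ _) (max_lt hdegQ ?_)
      refine lt_of_le_of_lt (degree_sum_le _ _) ?_
      refine (Finset.sup_lt_iff (by exact_mod_cast WithBot.bot_lt_coe N)).mpr ?_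
      intro i _
      refine lt_of_le_of_lt ?_ (hΦ'deg i)
      rw [← smul_eq_C_mul]
      exact degree_smul_le _ _
    have hR0 : R = 0 := typeII_small μ hμ n hnorm R hdegR horthR
    have hQeq : Q = ∑ j, C (ρ j) * Φ' j := by
      rw [hRdef] at hR0
      exact sub_eq_zero.mp hR0
    refine ⟨ρ, fun j hj => by rw [hρ]; simp [hj], ?_⟩
    rw [hΦeq, hQeq, Finset.mul_sum]
    congr 1
    exact Finset.sum_congr rfl fun j _ => by ring
  · -- uniqueness
    intro α₁ α₂ ρ₁ ρ₂ h₁0 h₂0 heq₁ heq₂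
    have hα₁ := keyα α₁ ρ₁ heq₁
    have hα₂ := keyα α₂ ρ₂ heq₂
    refine ⟨hα₁, funext fun i => ?_⟩
    by_cases hi : n i = 0
    · rw [h₁0 i hi, h₂0 i hi]
    · have k₁ := key i hi α₁ ρ₁ h₁0 heq₁
      have k₂ := key i hi α₂ ρ₂ h₂0 heq₂
      rw [hα₁] at k₁
      rw [hα₂] at k₂
      have hmm : ρ₁ i * mip (μ i) (Φ' i) (n i - 1) = ρ₂ i * mip (μ i) (Φ' i) (n i - 1) := by
        have := k₁.symm.trans k₂
        exact add_left_cancel this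
      exact mul_right_cancel₀ (hκ i hi) hmm
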